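/- The general max-plus Sylvester equation ⊕_{k=1}^p A_k ⊗ X ⊗ B_k = C is solvable if and only if X* = ⊕'_{k=1}^p A_k♯ ⊗' C ⊗' B_k♯ is a solution, and in that case X* is the maximum solution in the entrywise order. -/

import Mathlib

/-- Min-plus addition on `EReal`: agrees with `+` on finite values, with `⊤` absorbing. -/
noncomputable def mpAdd (a b : EReal) : EReal := -((-a) + (-b))

/-- Max-plus matrix multiplication. -/
noncomputable def maxMul {α β γ : Type*} [Fintype β]
    (A : Matrix α β EReal) (B : Matrix β γ EReal) : Matrix α γ EReal :=
  fun i j => ⨆ k, A i k + B k j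

/-- Min-plus matrix multiplication. -/
noncomputable def minMul {α β γ : Type*} [Fintype β]
    (A : Matrix α β EReal) (B : Matrix β γ EReal) : Matrix α γ EReal :=
  fun i j => ⨅ k, mpAdd (A i k) (B k j)

/-- Max-plus matrix-vector multiplication. -/
noncomputable def maxMulVec {α β : Type*} [Fintype β]
    (A : Matrix α β EReal) (x : β → EReal) : α → EReal :=
  fun i => ⨆ j, A i j + x j

/-- Min-plus matrix-vector multiplication. -/
noncomputable def minMulVec {α β : Type*} [Fintype β]
    (A : Matrix α β EReal) (x : β → EReal) : α → EReal :=
  fun i => ⨅ j, mpAdd (A i j) (x j)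

/-- Conjugate `A♯ = -Aᵀ` (sending `-∞` to `+∞` and vice versa). -/
noncomputable def conj {α β : Type*} (A : Matrix α β EReal) : Matrix β α EReal :=
  fun j i => -(A i j)

/-- Max-plus Kronecker product: block `(i,k),(j,l)` entry is `A i j + B k l`. -/
noncomputable def kron {α β γ δ : Type*} (A : Matrix α β EReal) (B : Matrix γ δ EReal) :
    Matrix (α × γ) (β × δ) EReal :=
  fun ik jl => A ik.1 jl.1 + B ik.2 jl.2

/-- Min-plus Kronecker product. -/
noncomputable def minKron {α β γ δ : Type*} (A : Matrix α β EReal) (B : Matrix γ δ EReal) :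
    Matrix (α × γ) (β × δ) EReal :=
  fun ik jl => mpAdd (A ik.1 jl.1) (B ik.2 jl.2)

/-- Column-stacking vectorization: `vec X (j, i) = X i j`. -/
def vec {α β : Type*} (X : Matrix α β EReal) : β × α → EReal := fun p => X p.2 p.1

/-- Entries lie in `ℝ ∪ {-∞}`, i.e. no `+∞` entries. -/
def RMaxEntries {α β : Type*} (A : Matrix α β EReal) : Prop := ∀ i j, A i j ≠ ⊤

/-- Doubly ℝ-astic: entries in `ℝ ∪ {-∞}`, with a finite entry in each row and column. -/
def DoublyRAstic {α β : Type*} (A : Matrix α β EReal) : Prop :=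
  (∀ i j, A i j ≠ ⊤) ∧ (∀ i, ∃ j, A i j ≠ ⊥) ∧ (∀ j, ∃ i, A i j ≠ ⊥)

/-- All entries of the matrix are finite reals. -/
def FiniteEntries {α β : Type*} (C : Matrix α β EReal) : Prop :=
  ∀ i j, ∃ r : ℝ, C i j = (r : EReal)

/-- All entries of the vector are finite reals. -/
def FiniteVec {α : Type*} (b : α → EReal) : Prop := ∀ i, ∃ r : ℝ, b i = (r : EReal)

/-!
In `EReal`, where `⊥ + ⊤ = ⊥`, the equivalence `a + x ≤ z ↔ x ≤ -(a + -z)` holds for all `a x z`: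
max-plus addition of `a` is residuated by min-plus addition of `-a`. Applying this entrywise and
over `k`, the map `X ↦ ⊕ₖ Aₖ ⊗ X ⊗ Bₖ` is the lower adjoint of a Galois connection whose upper
adjoint is `C ↦ ⊕'ₖ Aₖ♯ ⊗' C ⊗' Bₖ♯`. So every solution lies below `X*`, and `X*` is a subsolution;
hence `X*` is a solution as soon as some solution exists. It has no `+∞` entry because every column
of `Aₖ` and every row of `Bₖ` has a finite entry and `C` is finite.
-/

theorem le_mpAdd_neg_left_iff {a x z : EReal} : x ≤ mpAdd (-a) z ↔ a + x ≤ z := by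
  rw [mpAdd, neg_neg, EReal.le_neg]
  induction a <;> induction z <;> induction x <;> norm_cast <;> simp [add_comm]

theorem mpAdd_comm (a b : EReal) : mpAdd a b = mpAdd b a := by
  rw [mpAdd, mpAdd, add_comm]

theorem le_mpAdd_neg_right_iff {b x z : EReal} : x ≤ mpAdd z (-b) ↔ x + b ≤ z := by
  rw [mpAdd_comm, le_mpAdd_neg_left_iff, add_comm]

theorem add_iSup_le_iff {κ : Sort*} {a z : EReal} {f : κ → EReal} :
    a + ⨆ j, f j ≤ z ↔ ∀ j, a + f j ≤ z := by
  simp only [← le_mpAdd_neg_left_iff, iSup_le_iff]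

section Sylvester

variable {ι α α' β β' : Type*}
  (A : ι → Matrix α α' EReal) (B : ι → Matrix β' β EReal)

noncomputable def sylvesterMap [Fintype α'] [Fintype β'] (X : α' → β' → EReal) : α → β → EReal :=
  fun i j => ⨆ k, maxMul (A k) (maxMul X (B k)) i j

noncomputable def sylvesterResidual [Fintype α] [Fintype β] (C : α → β → EReal) : α' → β' → EReal :=
  fun i j => ⨅ k, minMul (conj (A k)) (minMul C (conj (B k))) i j

theorem sylvesterMap_le_iff [Fintype α'] [Fintype β'] (X : α' → β' → EReal) (C : α → β → EReal) :
    sylvesterMap A B X ≤ C ↔ ∀ s t k i j, A k s i + X i j + B k j t ≤ C s t := by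
  simp only [Pi.le_def, sylvesterMap, maxMul, iSup_le_iff, add_iSup_le_iff, add_assoc]

theorem le_sylvesterResidual_apply_iff [Fintype α] [Fintype β] (C : α → β → EReal) (i : α')
    (j : β') (x : EReal) :
    x ≤ sylvesterResidual A B C i j ↔ ∀ k s t, A k s i + x + B k j t ≤ C s t := by
  simp only [sylvesterResidual, minMul, conj, le_iInf_iff, le_mpAdd_neg_left_iff,
    le_mpAdd_neg_right_iff]

theorem sylvesterMap_gc [Fintype α] [Fintype α'] [Fintype β] [Fintype β'] :
    GaloisConnection (sylvesterMap A B) (sylvesterResidual A B) := fun X C => by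
  rw [sylvesterMap_le_iff]
  simp only [Pi.le_def, le_sylvesterResidual_apply_iff]
  exact ⟨fun h i j k s t => h s t k i j, fun h s t k i j => h i j k s t⟩

theorem sylvesterResidual_ne_top [Fintype α] [Fintype β] [Nonempty ι]
    (hA : ∀ k i, ∃ s, A k s i ≠ ⊥) (hB : ∀ k j, ∃ t, B k j t ≠ ⊥) {C : α → β → EReal}
    (hC : ∀ s t, C s t ≠ ⊤) (i : α') (j : β') : sylvesterResidual A B C i j ≠ ⊤ := by
  obtain ⟨k⟩ := ‹Nonempty ι›
  obtain ⟨s, hs⟩ := hA k i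
  obtain ⟨t, ht⟩ := hB k j
  rw [Ne, ← top_le_iff, le_sylvesterResidual_apply_iff]
  intro h
  have h_top : A k s i + ⊤ + B k j t = ⊤ := by
    rw [EReal.add_top_of_ne_bot hs, EReal.top_add_of_ne_bot ht]
  exact hC s t (top_le_iff.1 (h_top ▸ h k s t))

theorem nonempty_of_sylvesterMap_apply_ne_bot [Fintype α'] [Fintype β'] {X : α' → β' → EReal}
    {i : α} {j : β} (h : sylvesterMap A B X i j ≠ ⊥) : Nonempty ι :=
  not_isEmpty_iff.1 fun _ => h (by simp [sylvesterMap])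

end Sylvester

theorem stmt11 {m n p : ℕ} (A : Fin p → Matrix (Fin m) (Fin m) EReal)
    (B : Fin p → Matrix (Fin n) (Fin n) EReal) (C : Matrix (Fin m) (Fin n) EReal)
    (hA : ∀ k, DoublyRAstic (A k)) (hB : ∀ k, DoublyRAstic (B k)) (hC : FiniteEntries C) :
    ((∃ X : Matrix (Fin m) (Fin n) EReal, RMaxEntries X ∧
        (fun i j => ⨆ k, maxMul (A k) (maxMul X (B k)) i j) = C) ↔
      (fun i j => ⨆ k, maxMul (A k) (maxMul
          (fun i' j' => ⨅ k', minMul (conj (A k')) (minMul C (conj (B k'))) i' j')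
          (B k)) i j) = C) ∧
    (∀ X : Matrix (Fin m) (Fin n) EReal, RMaxEntries X →
      (fun i j => ⨆ k, maxMul (A k) (maxMul X (B k)) i j) = C →
      ∀ i j, X i j ≤ ⨅ k, minMul (conj (A k)) (minMul C (conj (B k))) i j) := by
  have gc := sylvesterMap_gc A B
  refine ⟨⟨?_, fun h => ⟨sylvesterResidual A B C, fun i j => ?_, h⟩⟩, fun X _ hX => ?_⟩
  · rintro ⟨X, -, hX⟩
    change sylvesterMap A B X = C at hX
    change sylvesterMap A B (sylvesterResidual A B C) = C
    rw [← hX]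
    exact gc.l_u_l_eq_l X
  · have hC_finite : ∀ s t, C s t ≠ ⊤ ∧ C s t ≠ ⊥ := fun s t => by
      obtain ⟨r, hr⟩ := hC s t
      simp [hr]
    have : Nonempty (Fin p) :=
      nonempty_of_sylvesterMap_apply_ne_bot A B (congrFun₂ h i j ▸ (hC_finite i j).2)
    exact sylvesterResidual_ne_top A B (fun k => (hA k).2.2) (fun k => (hB k).2.1)
      (fun s t => (hC_finite s t).1) i j
  · change sylvesterMap A B X = C at hX
    exact (gc X C).1 hX.le
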